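/- Consider the two-state Markov chain on 𝕏 = {1,2} with transition probabilities P(X_{t+1}=1 | X_t=1) = P(X_{t+1}=2 | X_t=1) = 1/2 and P(X_{t+1}=2 | X_t=2) = 1, payoff f(x) = x, and discount function δ(0) := 1 and δ(k) := (7/12)(1−ε)^k for k ≥ 1, where ε ∈ (0, 1/13). Then both S = {2} and S = {1,2} are equilibria; in particular, there exist at least two distinct equilibria. -/

import Mathlib

open MeasureTheory ProbabilityTheory Set Filter Topology
open scoped ENNReal ENat

noncomputable section

/-- The σ-algebra generated by the first `n+1` coordinates of the path space:
the natural filtration of the coordinate process at time `n`. -/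
def pathSigma (𝕏 : Type*) [m : MeasurableSpace 𝕏] (n : ℕ) : MeasurableSpace (ℕ → 𝕏) :=
  ⨆ i ∈ Finset.range (n + 1), MeasurableSpace.comap (fun ω : ℕ → 𝕏 => ω i) m

/-- `Pr` is the family of laws of the time-homogeneous Markov chain with one-step
transition kernel `Q`: under `Pr x` the chain starts at `x`, and the Markov property
`Pr^x(X_{n+1} ∈ A | 𝓕_n) = Q(X_n, A)` holds. -/
structure IsMarkovChainLaw {𝕏 : Type*} [MeasurableSpace 𝕏]
    (Pr : Kernel 𝕏 (ℕ → 𝕏)) (Q : Kernel 𝕏 𝕏) : Prop where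
  start : ∀ x : 𝕏, Pr x {ω | ω 0 = x} = 1
  markov : ∀ (x : 𝕏) (n : ℕ) (B : Set (ℕ → 𝕏)), MeasurableSet[pathSigma 𝕏 n] B →
    ∀ A : Set 𝕏, MeasurableSet A →
      Pr x (B ∩ {ω | ω (n + 1) ∈ A}) = ∫⁻ ω in B, Q (ω n) A ∂(Pr x)

/-- The first hitting time `ρ(x,S) = inf {t ≥ 1 : X_t ∈ S}` along the path `ω`
(equal to `⊤` if `S` is never reached at a time `≥ 1`). -/
def hitTime {𝕏 : Type*} (S : Set 𝕏) (ω : ℕ → 𝕏) : ℕ∞ :=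
  sInf {n : ℕ∞ | ∃ t : ℕ, n = (t : ℕ∞) ∧ 1 ≤ t ∧ ω t ∈ S}

/-- The discounted payoff `δ(ρ(x,S)) f(X_{ρ(x,S)})` collected along the path `ω`,
with the convention that it vanishes when `S` is never hit. -/
def stopPayoff {𝕏 : Type*} (δ : ℕ → ℝ) (f : 𝕏 → ℝ) (S : Set 𝕏) (ω : ℕ → 𝕏) : ℝ :=
  if hitTime S ω = ⊤ then 0
  else δ (hitTime S ω).toNat * f (ω (hitTime S ω).toNat)

/-- The objective value `J(x, ρ(x,S)) = 𝔼^x[δ(ρ(x,S)) f(X_{ρ(x,S)})]`. -/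
def valJ {𝕏 : Type*} [MeasurableSpace 𝕏] (Pr : Kernel 𝕏 (ℕ → 𝕏)) (δ : ℕ → ℝ) (f : 𝕏 → ℝ)
    (S : Set 𝕏) (x : 𝕏) : ℝ :=
  ∫ ω, stopPayoff δ f S ω ∂(Pr x)

/-- The operator `Θ(S) = {x ∈ 𝕏 : f(x) ≥ J(x, ρ(x,S))}`. -/
def Θ {𝕏 : Type*} [MeasurableSpace 𝕏] (Pr : Kernel 𝕏 (ℕ → 𝕏)) (δ : ℕ → ℝ) (f : 𝕏 → ℝ)
    (S : Set 𝕏) : Set 𝕏 :=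
  {x | valJ Pr δ f S x ≤ f x}

/-- A Borel set `S ⊆ 𝕏` is an equilibrium if `Θ(S) = S`. -/
def IsEquilibrium {𝕏 : Type*} [MeasurableSpace 𝕏] (Pr : Kernel 𝕏 (ℕ → 𝕏)) (δ : ℕ → ℝ)
    (f : 𝕏 → ℝ) (S : Set 𝕏) : Prop :=
  MeasurableSet S ∧ Θ Pr δ f S = S

/-- The value `V(x,S) = max (f x) (J(x, ρ(x,S)))` associated with an equilibrium `S`. -/
def valV {𝕏 : Type*} [MeasurableSpace 𝕏] (Pr : Kernel 𝕏 (ℕ → 𝕏)) (δ : ℕ → ℝ) (f : 𝕏 → ℝ)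
    (S : Set 𝕏) (x : 𝕏) : ℝ :=
  max (f x) (valJ Pr δ f S x)

/-! From 2 the chain moves to 2 at once, so `J(2, S) = 2 δ(1) ≤ 2` whenever `2 ∈ S`; from 1 the
first step already lands in `{1, 2}`, so `J(1, {1, 2}) = (3/2) δ(1) < 1`. For `S = {2}` the chain
waits at 1 for a geometric time before jumping to 2; splitting the path space by the jump time gives
`J(1, {2}) = ∑ⱼ 2^{-(j+1)} · 2 δ(j+1) = 7(1-ε) / (6(1+ε))`, which exceeds 1 exactly when `ε < 1/13`. -/

open Function

theorem integral_eq_tsum_of_eqOn_partition {Ω : Type*} [MeasurableSpace Ω] {μ : Measure Ω}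
    [IsFiniteMeasure μ] {s : ℕ → Set Ω} (hs : ∀ i, MeasurableSet (s i))
    (hd : Pairwise (Disjoint on s)) (hcover : ∀ᵐ ω ∂μ, ω ∈ ⋃ i, s i) {g : Ω → ℝ} {c : ℕ → ℝ}
    {C : ℝ} (hc : ∀ i, |c i| ≤ C) (hg : ∀ i, EqOn g (fun _ => c i) (s i)) :
    ∫ ω, g ω ∂μ = ∑' i, μ.real (s i) * c i := by
  have hg_ae : g =ᵐ[μ] fun ω => ∑' i, (s i).indicator (fun _ => c i) ω := by
    filter_upwards [hcover] with ω hω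
    obtain ⟨j, hj⟩ := mem_iUnion.1 hω
    rw [tsum_eq_single j fun i hij => indicator_of_notMem ((hd hij).notMem_of_mem_right hj) _,
      indicator_of_mem hj, hg j hj]
  have hfin : ∑' i, ∫⁻ ω, ‖(s i).indicator (fun _ => c i) ω‖ₑ ∂μ ≠ ∞ := by
    refine ne_top_of_le_ne_top (b := ENNReal.ofReal C * μ (⋃ i, s i)) (by finiteness) ?_
    simp_rw [enorm_indicator_eq_indicator_enorm, lintegral_indicator_const (hs _),
      measure_iUnion hd hs, ← ENNReal.tsum_mul_left]
    refine ENNReal.tsum_le_tsum fun i => mul_le_mul_left ?_ _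
    rw [Real.enorm_eq_ofReal_abs]
    exact ENNReal.ofReal_le_ofReal (hc i)
  rw [integral_congr_ae hg_ae, integral_tsum (fun i => by fun_prop (disch := exact hs i)) hfin]
  simp_rw [integral_indicator_const _ (hs _), smul_eq_mul]

theorem tsum_pow_mul_mul_geometric {p q a r c : ℝ} (h : |p * r| < 1) :
    ∑' j : ℕ, p ^ j * q * (a * r ^ (j + 1) * c) = a * q * c * r / (1 - p * r) := by
  simp_rw [show ∀ j : ℕ, p ^ j * q * (a * r ^ (j + 1) * c) = a * q * c * r * (p * r) ^ j
    from fun j => by ring]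
  rw [tsum_mul_left, tsum_geometric_of_abs_lt_one h, div_eq_mul_inv]

theorem hitTime_eq_of_first_mem {𝕏 : Type*} {S : Set 𝕏} {ω : ℕ → 𝕏} {k : ℕ} (hk : 1 ≤ k)
    (hmem : ω k ∈ S) (hbefore : ∀ t, 1 ≤ t → t < k → ω t ∉ S) : hitTime S ω = k := by
  refine le_antisymm (sInf_le ⟨k, rfl, hk, hmem⟩) (le_sInf ?_)
  rintro _ ⟨t, rfl, ht, htS⟩
  exact_mod_cast le_of_not_gt fun hlt => hbefore t ht hlt htS

theorem stopPayoff_of_first_mem {𝕏 : Type*} {δ : ℕ → ℝ} {f : 𝕏 → ℝ} {S : Set 𝕏}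
    {ω : ℕ → 𝕏} {k : ℕ} (hk : 1 ≤ k) (hmem : ω k ∈ S)
    (hbefore : ∀ t, 1 ≤ t → t < k → ω t ∉ S) : stopPayoff δ f S ω = δ k * f (ω k) := by
  simp [stopPayoff, hitTime_eq_of_first_mem hk hmem hbefore]

def stayPaths {𝕏 : Type*} (x : 𝕏) (n : ℕ) : Set (ℕ → 𝕏) := {ω | ∀ i ≤ n, ω i = x}

theorem stayPaths_succ {𝕏 : Type*} (x : 𝕏) (n : ℕ) :
    stayPaths x (n + 1) = stayPaths x n ∩ {ω | ω (n + 1) ∈ ({x} : Set 𝕏)} := by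
  ext ω
  simp only [stayPaths, mem_inter_iff, mem_ofPred_eq, mem_singleton_iff]
  exact ⟨fun h => ⟨fun i hi => h i (hi.trans n.le_succ), h _ le_rfl⟩,
    fun ⟨h, hn⟩ i hi => (Nat.le_succ_iff.1 hi).elim (h i) fun e => e ▸ hn⟩

section PathSpace

variable {𝕏 : Type*} [MeasurableSpace 𝕏]

theorem measurableSet_pathSigma_eval_preimage {n i : ℕ} (hi : i ≤ n) {A : Set 𝕏}
    (hA : MeasurableSet A) : MeasurableSet[pathSigma 𝕏 n] ((fun ω : ℕ → 𝕏 => ω i) ⁻¹' A) := by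
  have hle : MeasurableSpace.comap (fun ω : ℕ → 𝕏 => ω i) ‹_› ≤ pathSigma 𝕏 n :=
    le_iSup₂ (f := fun j (_ : j ∈ Finset.range (n + 1)) =>
      MeasurableSpace.comap (fun ω : ℕ → 𝕏 => ω j) ‹_›) i (Finset.mem_range_succ_iff.2 hi)
  exact hle _ ⟨A, hA, rfl⟩

theorem pathSigma_le_pi (n : ℕ) : pathSigma 𝕏 n ≤ MeasurableSpace.pi :=
  iSup₂_le fun i _ => (measurable_pi_apply i).comap_le

theorem measurableSet_pathSigma_stayPaths [MeasurableSingletonClass 𝕏] (x : 𝕏) (n : ℕ) :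
    MeasurableSet[pathSigma 𝕏 n] (stayPaths x n) := by
  have : stayPaths x n = ⋂ i ∈ Finset.range (n + 1), (fun ω : ℕ → 𝕏 => ω i) ⁻¹' {x} := by
    ext ω; simp [stayPaths]
  rw [this]
  exact Finset.measurableSet_biInter _ fun i hi =>
    measurableSet_pathSigma_eval_preimage (Finset.mem_range_succ_iff.1 hi) (measurableSet_singleton x)

end PathSpace

namespace IsMarkovChainLaw

variable {𝕏 : Type*} [MeasurableSpace 𝕏] {Pr : Kernel 𝕏 (ℕ → 𝕏)} {Q : Kernel 𝕏 𝕏}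

theorem measure_inter_eval_succ_mem (hchain : IsMarkovChainLaw Pr Q) (x c : 𝕏) {n : ℕ}
    {B : Set (ℕ → 𝕏)} (hB : MeasurableSet[pathSigma 𝕏 n] B) (hBc : ∀ ω ∈ B, ω n = c)
    {A : Set 𝕏} (hA : MeasurableSet A) :
    Pr x (B ∩ {ω | ω (n + 1) ∈ A}) = Q c A * Pr x B := by
  rw [hchain.markov x n B hB A hA, setLIntegral_congr_fun (pathSigma_le_pi n _ hB)
    fun ω hω => by rw [hBc ω hω], setLIntegral_const]

variable [MeasurableSingletonClass 𝕏]

theorem measure_stayPaths (hchain : IsMarkovChainLaw Pr Q) (x : 𝕏) (n : ℕ) :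
    Pr x (stayPaths x n) = Q x {x} ^ n := by
  induction n with
  | zero =>
    simpa [stayPaths] using hchain.start x
  | succ n ih =>
    rw [stayPaths_succ, hchain.measure_inter_eval_succ_mem x x
      (measurableSet_pathSigma_stayPaths x n) (fun ω hω => hω n le_rfl)
      (measurableSet_singleton x), ih, pow_succ']

theorem measure_stayPaths_inter (hchain : IsMarkovChainLaw Pr Q) (x : 𝕏) (n : ℕ) {A : Set 𝕏}
    (hA : MeasurableSet A) :
    Pr x (stayPaths x n ∩ {ω | ω (n + 1) ∈ A}) = Q x {x} ^ n * Q x A := by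
  rw [hchain.measure_inter_eval_succ_mem x x (measurableSet_pathSigma_stayPaths x n)
    (fun ω hω => hω n le_rfl) hA, hchain.measure_stayPaths, mul_comm]

variable [IsMarkovKernel Pr]

theorem map_eval_one (hchain : IsMarkovChainLaw Pr Q) (x : 𝕏) :
    (Pr x).map (fun ω => ω 1) = Q x := by
  ext A hA
  have hstay : Pr x (stayPaths x 0)ᶜ = 0 := by
    rw [prob_compl_eq_zero_iff (pathSigma_le_pi 0 _ (measurableSet_pathSigma_stayPaths x 0)),
      hchain.measure_stayPaths, pow_zero]
  rw [Measure.map_apply (measurable_pi_apply 1) hA, ← measure_inter_conull hstay, inter_comm]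
  exact (hchain.measure_stayPaths_inter x 0 hA).trans (by rw [pow_zero, one_mul])

variable {δ : ℕ → ℝ} {f : 𝕏 → ℝ} {S : Set 𝕏} {x : 𝕏}

theorem valJ_eq_of_kernel_apply_eq_one (hchain : IsMarkovChainLaw Pr Q) (hf : Measurable f)
    (hS : MeasurableSet S) (hQS : Q x S = 1) : valJ Pr δ f S x = δ 1 * ∫ y, f y ∂(Q x) := by
  have hstep : ∀ᵐ ω ∂(Pr x), ω 1 ∈ S := by
    rw [ae_iff_measure_eq (measurable_pi_apply 1 hS).nullMeasurableSet, measure_univ,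
      ← hQS, ← hchain.map_eval_one, Measure.map_apply (measurable_pi_apply 1) hS]
    rfl
  have hpayoff : stopPayoff δ f S =ᵐ[Pr x] fun ω => δ 1 * f (ω 1) := by
    filter_upwards [hstep] with ω hω
    exact stopPayoff_of_first_mem le_rfl hω fun t ht hlt => absurd hlt (by omega)
  rw [valJ, integral_congr_ae hpayoff, integral_const_mul,
    ← integral_map (measurable_pi_apply 1).aemeasurable hf.aestronglyMeasurable,
    hchain.map_eval_one]

theorem valJ_of_dirac (hchain : IsMarkovChainLaw Pr Q) (hf : Measurable f) (hS : MeasurableSet S)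
    (hQx : Q x = Measure.dirac x) (hx : x ∈ S) : valJ Pr δ f S x = δ 1 * f x := by
  rw [hchain.valJ_eq_of_kernel_apply_eq_one hf hS (by simp [hQx, hS, hx]), hQx, integral_dirac]

theorem valJ_eq_tsum_of_stay_or_jump (hchain : IsMarkovChainLaw Pr Q) {y : 𝕏} (hx : x ∉ S)
    (hy : y ∈ S) (hQ : Q x {x} + Q x {y} = 1) (hQy : Q x {y} ≠ 0) {C : ℝ}
    (hδ : ∀ k, |δ (k + 1)| ≤ C) :
    valJ Pr δ f S x = ∑' j, (Q x {x}).toReal ^ j * (Q x {y}).toReal * (δ (j + 1) * f y) := by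
  set D : ℕ → Set (ℕ → 𝕏) := fun j => stayPaths x j ∩ {ω | ω (j + 1) ∈ ({y} : Set 𝕏)}
  have hD : ∀ j, MeasurableSet (D j) := fun j =>
    (pathSigma_le_pi j _ (measurableSet_pathSigma_stayPaths x j)).inter
      (measurable_pi_apply _ (measurableSet_singleton y))
  have hPD : ∀ j, Pr x (D j) = Q x {x} ^ j * Q x {y} := fun j =>
    hchain.measure_stayPaths_inter x j (measurableSet_singleton y)
  have hxy : x ≠ y := fun h => hx (h ▸ hy)
  have hdisj : Pairwise (Disjoint on D) := by
    refine (pairwise_disjoint_on D).2 fun i j hij => disjoint_left.2 ?_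
    rintro ω ⟨-, hωi⟩ ⟨hωj, -⟩
    exact hxy ((hωj (i + 1) hij).symm.trans hωi)
  have hcover : ∀ᵐ ω ∂(Pr x), ω ∈ ⋃ j, D j := by
    have hq : 1 - Q x {x} = Q x {y} :=
      ENNReal.sub_eq_of_eq_add_rev (ne_top_of_le_ne_top ENNReal.one_ne_top (hQ ▸ le_self_add))
        hQ.symm
    rw [ae_mem_iff_measure_eq (MeasurableSet.iUnion hD).nullMeasurableSet, measure_univ,
      measure_iUnion hdisj hD]
    simp_rw [hPD]
    rw [ENNReal.tsum_mul_right, ENNReal.tsum_geometric, hq,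
      ENNReal.inv_mul_cancel hQy (hq ▸ ENNReal.sub_ne_top ENNReal.one_ne_top)]
  have hpayoff : ∀ j, EqOn (stopPayoff δ f S) (fun _ => δ (j + 1) * f y) (D j) := by
    rintro j ω ⟨hstay, hjump⟩
    rw [mem_ofPred_eq, mem_singleton_iff] at hjump
    rw [stopPayoff_of_first_mem (by omega) (hjump ▸ hy)
      fun t _ ht => (hstay t (Nat.lt_succ_iff.1 ht)).symm ▸ hx, hjump]
  rw [valJ, integral_eq_tsum_of_eqOn_partition hD hdisj hcover
    (fun j => (abs_mul _ _).trans_le (mul_le_mul_of_nonneg_right (hδ j) (abs_nonneg _))) hpayoff]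
  simp_rw [measureReal_def, hPD, ENNReal.toReal_mul, ENNReal.toReal_pow]

end IsMarkovChainLaw

theorem Set.sep_pair_eq_singleton {α : Type*} {a b : α} {p : α → Prop} (ha : ¬p a) (hb : p b) :
    {x ∈ ({a, b} : Set α) | p x} = {b} := by
  ext x
  constructor
  · rintro ⟨rfl | rfl, hx⟩
    exacts [absurd hx ha, rfl]
  · rintro rfl
    exact ⟨Or.inr rfl, hb⟩

theorem valJ_one_singleton_two {Pr : Kernel ℕ (ℕ → ℕ)} [IsMarkovKernel Pr] {Q : Kernel ℕ ℕ}
    (hchain : IsMarkovChainLaw Pr Q)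
    (hQ1 : Q 1 = (1 / 2 : ℝ≥0∞) • Measure.dirac 1 + (1 / 2 : ℝ≥0∞) • Measure.dirac 2)
    {ε : ℝ} (hε0 : 0 ≤ ε) (hε2 : ε ≤ 2) {δ : ℕ → ℝ}
    (hδ_pos : ∀ k : ℕ, 1 ≤ k → δ k = 7 / 12 * (1 - ε) ^ k) :
    valJ Pr δ (fun y => (y : ℝ)) {2} 1 = 7 * (1 - ε) / (6 * (1 + ε)) := by
  have hδ_le : ∀ k, |δ (k + 1)| ≤ 7 / 12 := fun k => by
    rw [hδ_pos _ k.succ_pos, abs_mul, abs_pow, abs_of_pos (by norm_num : (0 : ℝ) < 7 / 12)]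
    exact mul_le_of_le_one_right (by norm_num)
      (pow_le_one₀ (abs_nonneg _) (by rw [abs_le]; constructor <;> linarith))
  rw [hchain.valJ_eq_tsum_of_stay_or_jump (by simp) (mem_singleton 2)
    (by simp [hQ1, ENNReal.inv_two_add_inv_two]) (by simp [hQ1]) hδ_le]
  have hQ11 : (Q 1 {1}).toReal = 1 / 2 := by simp [hQ1]
  have hQ12 : (Q 1 {2}).toReal = 1 / 2 := by simp [hQ1]
  simp_rw [hQ11, hQ12, hδ_pos _ (Nat.succ_pos _), Nat.cast_ofNat]
  rw [tsum_pow_mul_mul_geometric (by rw [abs_lt]; constructor <;> linarith),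
    div_eq_div_iff (by linarith) (by positivity)]
  ring

theorem two_equilibria_example_general
    (Pr : Kernel ℕ (ℕ → ℕ)) [IsMarkovKernel Pr] (Q : Kernel ℕ ℕ)
    (hchain : IsMarkovChainLaw Pr Q)
    (hQ1 : Q 1 = (1 / 2 : ℝ≥0∞) • Measure.dirac 1 + (1 / 2 : ℝ≥0∞) • Measure.dirac 2)
    (hQ2 : Q 2 = Measure.dirac 2)
    (ε : ℝ) (hε0 : 0 < ε) (hε1 : ε < 1 / 13)
    (δ : ℕ → ℝ) (hδ_pos : ∀ k : ℕ, 1 ≤ k → δ k = (7 / 12) * (1 - ε) ^ k) :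
    {x ∈ ({1, 2} : Set ℕ) | valJ Pr δ (fun y => (y : ℝ)) ({2} : Set ℕ) x ≤ (x : ℝ)}
        = ({2} : Set ℕ) ∧
    {x ∈ ({1, 2} : Set ℕ) | valJ Pr δ (fun y => (y : ℝ)) ({1, 2} : Set ℕ) x ≤ (x : ℝ)}
        = ({1, 2} : Set ℕ) ∧
    ({2} : Set ℕ) ≠ ({1, 2} : Set ℕ) := by
  have hδ1 : δ 1 = 7 / 12 * (1 - ε) := by simpa using hδ_pos 1 le_rfl
  have hJ_two : ∀ S : Set ℕ, 2 ∈ S → valJ Pr δ (fun y => (y : ℝ)) S 2 = δ 1 * 2 := fun S hS =>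
    hchain.valJ_of_dirac measurable_from_nat (.of_discrete) hQ2 hS
  have hJ_one_pair : valJ Pr δ (fun y => (y : ℝ)) {1, 2} 1 = δ 1 * (3 / 2) := by
    rw [hchain.valJ_eq_of_kernel_apply_eq_one measurable_from_nat (.of_discrete)
      (by simp [hQ1, ENNReal.inv_two_add_inv_two]), hQ1,
      integral_add_measure ((integrable_dirac (by simp)).smul_measure (by simp))
        ((integrable_dirac (by simp)).smul_measure (by simp))]
    norm_num
  have hJ_one_single_gt : 1 < valJ Pr δ (fun y => (y : ℝ)) {2} 1 := by
    rw [valJ_one_singleton_two hchain hQ1 hε0.le (by linarith) hδ_pos, lt_div_iff₀ (by linarith)]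
    linarith
  refine ⟨sep_pair_eq_singleton (by push_cast; linarith) ?_,
    sep_eq_self_iff_mem_true.2 ?_, ?_⟩
  · rw [hJ_two {2} rfl, hδ1]; push_cast; linarith
  · rintro x (rfl | rfl)
    · rw [hJ_one_pair, hδ1]; push_cast; linarith
    · rw [hJ_two {1, 2} (by simp), hδ1]; push_cast; linarith
  · exact fun h => by simpa using h.symm.subset (mem_insert 1 {2})

/-- For the two-state chain on `{1, 2}` with `f(x) = x` and discount function
`δ(0) = 1`, `δ(k) = (7/12)(1−ε)^k` for `k ≥ 1` with `ε ∈ (0, 1/13)`, both `{2}` and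
`{1,2}` are equilibria; in particular there are at least two distinct equilibria. -/
theorem two_equilibria_example
    (Pr : Kernel ℕ (ℕ → ℕ)) [IsMarkovKernel Pr] (Q : Kernel ℕ ℕ) [IsMarkovKernel Q]
    (hchain : IsMarkovChainLaw Pr Q)
    (hQ1 : Q 1 = (1 / 2 : ℝ≥0∞) • Measure.dirac 1 + (1 / 2 : ℝ≥0∞) • Measure.dirac 2)
    (hQ2 : Q 2 = Measure.dirac 2)
    (ε : ℝ) (hε0 : 0 < ε) (hε1 : ε < 1 / 13)
    (δ : ℕ → ℝ) (hδ_zero : δ 0 = 1) (hδ_pos : ∀ k : ℕ, 1 ≤ k → δ k = (7 / 12) * (1 - ε) ^ k) :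
    {x ∈ ({1, 2} : Set ℕ) | valJ Pr δ (fun y => (y : ℝ)) ({2} : Set ℕ) x ≤ (x : ℝ)}
        = ({2} : Set ℕ) ∧
    {x ∈ ({1, 2} : Set ℕ) | valJ Pr δ (fun y => (y : ℝ)) ({1, 2} : Set ℕ) x ≤ (x : ℝ)}
        = ({1, 2} : Set ℕ) ∧
    ({2} : Set ℕ) ≠ ({1, 2} : Set ℕ) :=
  two_equilibria_example_general Pr Q hchain hQ1 hQ2 ε hε0 hε1 δ hδ_pos

end
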